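/- arXiv:1411.4727 — 3 statements merged into one kernel-verified Lean document; each statement's English description precedes it below -/
import Mathlib

section
/- For any positive integers n and k with n ≥ k, the two-parameter quantum binomial coefficient [n choose k]_{v,t} = [n]_{v,t}!/([k]_{v,t}! [n-k]_{v,t}!), where [m]_{v,t} = ((vt)^m - (vt^{-1})^{-m})/((vt) - (vt^{-1})^{-1}), is a Laurent polynomial in v and t with integer coefficients (i.e., lies in ℤ[v^{±1}, t^{±1}]). -/
/- STATEMENT 0: For positive integers n ≥ k, the two-parameter quantum binomial
coefficient [n choose k]_{v,t} lies in ℤ[v^{±1}, t^{±1}]. -/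

noncomputable section

/-- The field ℚ(t). -/
abbrev FF : Type := RatFunc ℚ
/-- The field ℚ(v,t), realized as ℚ(t)(v). -/
abbrev KK : Type := RatFunc FF
/-- The variable v in ℚ(v,t). -/
def vv : KK := RatFunc.X
/-- The variable t in ℚ(v,t). -/
def tt : KK := algebraMap FF KK RatFunc.X

/-- The two-parameter quantum integer [n]_{v,t} = ((vt)^n - (vt^{-1})^{-n})/(vt - (vt^{-1})^{-1}). -/
def qnumvt (v t : KK) (n : ℕ) : KK := ((v*t)^n - ((v*t⁻¹)⁻¹)^n)/(v*t - (v*t⁻¹)⁻¹)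

/-- The two-parameter quantum factorial [n]_{v,t}! = ∏_{r=1}^n [r]_{v,t}. -/
def qfacvt (v t : KK) (n : ℕ) : KK := ∏ r ∈ Finset.Icc 1 n, qnumvt v t r

/-- The two-parameter quantum binomial [n choose k]_{v,t}. -/
def qbinvt (v t : KK) (n k : ℕ) : KK := qfacvt v t n / (qfacvt v t k * qfacvt v t (n-k))

/-
With `x = v t` and `y = (v t⁻¹)⁻¹ = v⁻¹ t` the quantum integer is `[n] = (xⁿ - yⁿ) / (x - y)`, so
`[a + b] = xᵃ [b] + yᵇ [a]`. Multiplying through by factorials turns this into the Pascal rule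
`[k+l+2 choose k+1] = x^(k+1) [k+l+1 choose k+1] + y^(l+1) [k+l+1 choose k]`, and induction puts
every binomial in the semiring generated by `x` and `y`. Clearing the factorials only needs the
quantum integers to be nonzero, which holds because `v` is not a root of unity.
-/

theorem qnumvt_add (v t : KK) (a b : ℕ) :
    qnumvt v t (a + b) = (v * t) ^ a * qnumvt v t b + ((v * t⁻¹)⁻¹) ^ b * qnumvt v t a := by
  simp only [qnumvt, mul_div_assoc', ← add_div]
  ring

theorem qnumvt_ne_zero {v t : KK} (hv : v ≠ 0) (ht : t ≠ 0) (hv_ord : ¬IsOfFinOrder v) {r : ℕ}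
    (hr : r ≠ 0) : qnumvt v t r ≠ 0 := by
  have hpow : ∀ r ≠ 0, (v * t) ^ r ≠ ((v * t⁻¹)⁻¹) ^ r := by
    intro r hr h
    refine hv_ord (isOfFinOrder_iff_pow_eq_one.2 ⟨2 * r, by omega, ?_⟩)
    calc v ^ (2 * r) = (v * t) ^ r / ((v * t⁻¹)⁻¹) ^ r := by
          rw [← div_pow, pow_mul]
          field_simp
      _ = 1 := by rw [h, div_self (by simp [hv, ht])]
  exact div_ne_zero (sub_ne_zero.2 (hpow r hr)) (by simpa [sub_ne_zero] using hpow 1 one_ne_zero)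

theorem qfacvt_succ (v t : KK) (n : ℕ) : qfacvt v t (n + 1) = qfacvt v t n * qnumvt v t (n + 1) :=
  Finset.prod_Icc_succ_top (Nat.le_add_left 1 n) _

theorem qfacvt_zero (v t : KK) : qfacvt v t 0 = 1 := by
  simp [qfacvt]

theorem qfacvt_ne_zero {v t : KK} (hq : ∀ r ≠ 0, qnumvt v t r ≠ 0) (n : ℕ) : qfacvt v t n ≠ 0 :=
  Finset.prod_ne_zero_iff.2 fun r hr ↦ hq r (by simp at hr; omega)

theorem qbinvt_add_left (v t : KK) (k l : ℕ) :
    qbinvt v t (k + l) k = qfacvt v t (k + l) / (qfacvt v t k * qfacvt v t l) := by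
  rw [qbinvt, Nat.add_sub_cancel_left]

theorem qbinvt_zero_right {v t : KK} (hq : ∀ r ≠ 0, qnumvt v t r ≠ 0) (n : ℕ) :
    qbinvt v t n 0 = 1 := by
  rw [qbinvt, Nat.sub_zero, qfacvt_zero, one_mul, div_self (qfacvt_ne_zero hq n)]

theorem qbinvt_self {v t : KK} (hq : ∀ r ≠ 0, qnumvt v t r ≠ 0) (n : ℕ) :
    qbinvt v t n n = 1 := by
  rw [qbinvt, Nat.sub_self, qfacvt_zero, mul_one, div_self (qfacvt_ne_zero hq n)]

theorem qbinvt_pascal {v t : KK} (hq : ∀ r ≠ 0, qnumvt v t r ≠ 0) (k l : ℕ) :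
    qbinvt v t ((k + 1) + (l + 1)) (k + 1) =
      (v * t) ^ (k + 1) * qbinvt v t ((k + 1) + l) (k + 1)
        + ((v * t⁻¹)⁻¹) ^ (l + 1) * qbinvt v t (k + (l + 1)) k := by
  have hk := qfacvt_ne_zero hq k
  have hl := qfacvt_ne_zero hq l
  have hk' := hq (k + 1) k.succ_ne_zero
  have hl' := hq (l + 1) l.succ_ne_zero
  have hsucc : qfacvt v t ((k + 1) + (l + 1)) = qfacvt v t ((k + 1) + l) *
      ((v * t) ^ (k + 1) * qnumvt v t (l + 1) + ((v * t⁻¹)⁻¹) ^ (l + 1) * qnumvt v t (k + 1)) := by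
    rw [← qnumvt_add]
    exact qfacvt_succ v t _
  simp only [qbinvt_add_left]
  rw [hsucc, show k + (l + 1) = (k + 1) + l by omega, qfacvt_succ v t k, qfacvt_succ v t l]
  field_simp

theorem qbinvt_add_left_mem_closure {v t : KK} (hq : ∀ r ≠ 0, qnumvt v t r ≠ 0) (k l : ℕ) :
    qbinvt v t (k + l) k ∈ Subsemiring.closure {v * t, (v * t⁻¹)⁻¹} := by
  have hx : v * t ∈ Subsemiring.closure {v * t, (v * t⁻¹)⁻¹} :=
    Subsemiring.subset_closure (by simp)
  have hy : (v * t⁻¹)⁻¹ ∈ Subsemiring.closure {v * t, (v * t⁻¹)⁻¹} :=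
    Subsemiring.subset_closure (by simp)
  induction k generalizing l with
  | zero => simp [qbinvt_zero_right hq]
  | succ k ihk =>
    induction l with
    | zero => simp [qbinvt_self hq]
    | succ l ihl =>
      rw [qbinvt_pascal hq]
      exact add_mem (mul_mem (pow_mem hx _) ihl) (mul_mem (pow_mem hy _) (ihk (l + 1)))

theorem vv_ne_zero : vv ≠ 0 := RatFunc.X_ne_zero

theorem tt_ne_zero : tt ≠ 0 := (map_ne_zero _).2 RatFunc.X_ne_zero

theorem not_isOfFinOrder_vv : ¬IsOfFinOrder vv := by
  rw [isOfFinOrder_iff_pow_eq_one]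
  rintro ⟨n, hn, h⟩
  have : (Polynomial.X ^ n : Polynomial FF) = 1 :=
    RatFunc.algebraMap_injective FF (by rw [map_pow, map_one]; exact h)
  simpa [hn.ne'] using congrArg Polynomial.natDegree this

/-- For positive integers n ≥ k, the two-parameter quantum binomial coefficient is a
Laurent polynomial in v and t with integer coefficients. -/
theorem qbinvt_mem_laurent : ∀ n k : ℕ, 0 < n → 0 < k → k ≤ n →
    qbinvt vv tt n k ∈ Algebra.adjoin ℤ ({vv, vv⁻¹, tt, tt⁻¹} : Set KK) := by
  intro n k _ _ hkn
  obtain ⟨l, rfl⟩ := Nat.exists_eq_add_of_le hkn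
  have hq : ∀ r ≠ 0, qnumvt vv tt r ≠ 0 := fun r hr ↦
    qnumvt_ne_zero vv_ne_zero tt_ne_zero not_isOfFinOrder_vv hr
  refine Subsemiring.closure_le.2 ?_ (qbinvt_add_left_mem_closure hq k l)
  have hgen : ∀ x ∈ ({vv, vv⁻¹, tt, tt⁻¹} : Set KK),
      x ∈ Algebra.adjoin ℤ ({vv, vv⁻¹, tt, tt⁻¹} : Set KK) := fun x hx ↦ Algebra.subset_adjoin hx
  rintro x (rfl | rfl)
  · exact mul_mem (hgen vv (by simp)) (hgen tt (by simp))
  · rw [mul_inv, inv_inv]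
    exact mul_mem (hgen vv⁻¹ (by simp)) (hgen tt (by simp))
end
end

section
/- Let U^- be the negative part of the two-parameter quantum group, with operators e_i', e_i'' ∈ End(U^-) characterized by [e_i, y] = (k_i e_i''(y) - k_i' e_i'(y))/(v_i - v_i^{-1}) for all y ∈ U^-. Then for all i, j ∈ I, the operators satisfy the commutation relation e_i' ∘ e_j'' = v^{i·j} t^{-⟨i,j⟩+⟨j,i⟩} · e_j'' ∘ e_i'. -/
/-!
For a scalar `c`, the set of `y` on which `e' i ∘ e'' j` and `c • (e'' j ∘ e' i)` agree is a subspace containing `1`,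
so, as the `f k` generate `U`, it suffices that it is stable under left multiplication by each
`f k`. Expanding both sides on `f k * y` with the twisted Leibniz rules, the terms in
`f k * (⋯)` agree by hypothesis on `y`, and the two Kronecker-delta terms agree exactly when
`c` inverts the twist of `e' i` at `j` and equals the twist of `e'' j` at `i`; both conditions
single out `c = v ^ (i·j) * t ^ (⟨j,i⟩ - ⟨i,j⟩)`.
-/

theorem Submodule.eq_top_of_one_mem_of_mul_left_mem {R A : Type*} [CommSemiring R] [Semiring A]
    [Algebra R A] {s : Set A} (hs : Algebra.adjoin R s = ⊤) (P : Submodule R A) (one : 1 ∈ P)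
    (mul_left : ∀ x ∈ s, ∀ y ∈ P, x * y ∈ P) : P = ⊤ := by
  have : Subalgebra.toSubmodule (Algebra.adjoin R s) ≤ P := by
    rw [Algebra.adjoin_eq_span, Submodule.span_le]
    intro x hx
    induction hx using Submonoid.closure_induction_left with
    | one => exact one
    | mul_left x hx y _ ih => exact mul_left x hx y ih
  rwa [hs, Algebra.top_toSubmodule, top_le_iff] at this

section TwistedDerivation

variable {R A ι : Type*} [CommRing R] [Ring A] [Algebra R A] [DecidableEq ι]
  {f : ι → A} {φ ψ : Module.End R A} {i j : ι} {α β : ι → R} {c : R}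

theorem comp_apply_mul_left_eq_smul_of_twisted
    (hφ : ∀ k y, φ (f k * y) = (if i = k then y else 0) + α k • (f k * φ y))
    (hψ : ∀ k y, ψ (f k * y) = (if j = k then y else 0) + β k • (f k * ψ y))
    (hα : c * α j = 1) (hβ : β i = c) (k : ι) {y : A} (hy : φ (ψ y) = c • ψ (φ y)) :
    φ (ψ (f k * y)) = c • ψ (φ (f k * y)) := by
  rw [hψ, map_add, map_smul, hφ, hφ, map_add, map_smul, hψ, hy]
  simp only [smul_add, mul_smul_comm, smul_smul]
  split_ifs with hjk hik hik
  · subst hjk hik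
    linear_combination (norm := module) hβ • ψ y - hα • φ y
  · subst hjk
    simp only [map_zero, smul_zero, zero_add]
    linear_combination (norm := module) -hα • φ y
  · subst hik
    simp only [map_zero, smul_zero, zero_add]
    linear_combination (norm := module) hβ • ψ y
  · simp only [map_zero, smul_zero, zero_add]
    module

theorem comp_eq_smul_comp_of_twisted (hf : Algebra.adjoin R (Set.range f) = ⊤)
    (hφ₁ : φ 1 = 0) (hψ₁ : ψ 1 = 0)
    (hφ : ∀ k y, φ (f k * y) = (if i = k then y else 0) + α k • (f k * φ y))
    (hψ : ∀ k y, ψ (f k * y) = (if j = k then y else 0) + β k • (f k * ψ y))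
    (hα : c * α j = 1) (hβ : β i = c) :
    φ ∘ₗ ψ = c • (ψ ∘ₗ φ) := by
  have hker : LinearMap.ker (φ ∘ₗ ψ - c • (ψ ∘ₗ φ)) = ⊤ := by
    refine Submodule.eq_top_of_one_mem_of_mul_left_mem hf _ ?_ ?_
    · simp [hφ₁, hψ₁]
    · rintro _ ⟨k, rfl⟩ y hy
      simp only [LinearMap.mem_ker, LinearMap.sub_apply, LinearMap.smul_apply,
        LinearMap.comp_apply, sub_eq_zero] at hy ⊢
      exact comp_apply_mul_left_eq_smul_of_twisted hφ hψ hα hβ k hy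
  exact sub_eq_zero.mp (LinearMap.ker_eq_top.mp hker)

end TwistedDerivation

theorem eprime_edoubleprime_comm
    {K : Type*} [Field K] (v t : K) (hv : v ≠ 0) (ht : t ≠ 0)
    {I : Type*} [DecidableEq I] (a : I → I → ℤ)
    {U : Type*} [Ring U] [Algebra K U] (f : I → U)
    (hgen : Algebra.adjoin K (Set.range f) = ⊤)
    (e' e'' : I → Module.End K U)
    (he'one : ∀ i, e' i 1 = 0) (he''one : ∀ i, e'' i 1 = 0)
    (he'f : ∀ i j y, e' i (f j * y) =
      (if i = j then y else 0) + (v ^ (-(a i j + a j i)) * t ^ (a i j - a j i)) • (f j * e' i y))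
    (he''f : ∀ i j y, e'' i (f j * y) =
      (if i = j then y else 0) + (v ^ (a i j + a j i) * t ^ (a i j - a j i)) • (f j * e'' i y)) :
    ∀ i j, e' i ∘ₗ e'' j = (v ^ (a i j + a j i) * t ^ (a j i - a i j)) • (e'' j ∘ₗ e' i) := by
  intro i j
  refine comp_eq_smul_comp_of_twisted hgen (he'one i) (he''one j) (he'f i) (he''f j) ?_ ?_
  · rw [zpow_neg, ← neg_sub, zpow_neg, mul_mul_mul_comm, mul_inv_cancel₀ (zpow_ne_zero _ hv),
      inv_mul_cancel₀ (zpow_ne_zero _ ht), one_mul]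
  · rw [add_comm]
end

section
/- Let y ∈ U^-_{v,t}(g)_ξ with e_i'(y) = 0, let M be a U_{v,t}(g)-module and m ∈ M_λ with e_i m = 0. Then for every n ≥ 0, k_i'^{-n} e_i^n (y·m) = (v_i^{n(2⟨h_i, λ+ξ⟩ + 3n + 1)}/(v_i - v_i^{-1})^n) · (e_i''^n y)·m. -/
/- STATEMENT 11: Let y ∈ U^-_{v,t}(g)_ξ with e_i'(y) = 0, M a U_{v,t}(g)-module, and
m ∈ M_λ with e_i m = 0. Then k_i'^{-n} e_i^n (y·m) =
(v_i^{n(2⟨h_i,λ+ξ⟩+3n+1)}/(v_i - v_i^{-1})^n) · (e_i''^n y)·m.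

We formalize this inside End(M): E, Kk, Kk', Kk'⁻¹ are the actions of e_i, k_i, k_i',
k_i'^{-1}; Y n is the action of e_i''^n(y) (so Y 0 is the action of y); h = ⟨h_i, λ+ξ⟩;
s is the t-part t^{⟨i,λ+ξ⟩-⟨λ+ξ,i⟩} of the weight of y·m. Since e_i'(e_i''^n y) = 0, the
defining property [e_i, z] = (k_i e_i''(z) - k_i' e_i'(z))/(v_i - v_i^{-1}) becomes the
commutator hypothesis below, and the weight hypotheses record that e_i''^n(y)·m has weight
λ+ξ+nα_i. -/

noncomputable section

theorem kprime_inv_pow_e_pow_smul {K : Type*} [Field K]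
    (vi s : K) (hvi : vi ≠ 0) (hs : s ≠ 0) (h : ℤ)
    {M : Type*} [AddCommGroup M] [Module K M]
    (E Kk Kk' Kk'inv : Module.End K M) (Y : ℕ → Module.End K M) (m : M)
    -- e_i m = 0
    (hEm : E m = 0)
    -- [e_i, e_i''^n(y)] = k_i e_i''^{n+1}(y)/(v_i - v_i^{-1}), since e_i'(e_i''^n y) = 0
    (hcomm : ∀ n, E * Y n - Y n * E = (vi - vi⁻¹)⁻¹ • (Kk * Y (n + 1)))
    -- k_i' k_i'^{-1} = k_i'^{-1} k_i' = 1
    (hKinv : Kk'inv * Kk' = 1 ∧ Kk' * Kk'inv = 1)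
    -- k_i' e_i = v^{-i·i} e_i k_i'  (from relation (R2))
    (hKE : Kk' * E = (vi ^ (-2 : ℤ)) • (E * Kk'))
    -- weight of e_i''^n(y)·m is λ+ξ+nα_i:
    (hwtK : ∀ n, Kk ((Y n) m) = (vi ^ (h + 2 * n) * s) • (Y n) m)
    (hwtK' : ∀ n, Kk' ((Y n) m) = (vi ^ (-(h + 2 * n)) * s) • (Y n) m) :
    ∀ n : ℕ, ((Kk'inv ^ n) * (E ^ n)) ((Y 0) m) =
      (vi ^ ((n : ℤ) * (2 * h + 3 * n + 1)) / (vi - vi⁻¹) ^ n) • (Y n) m := by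
  -- E applied to Y n m
  have hE : ∀ n : ℕ, E ((Y n) m) =
      ((vi - vi⁻¹)⁻¹ * (vi ^ (h + 2 * ((n : ℤ) + 1)) * s)) • (Y (n + 1)) m := by
    intro n
    have := congrArg (fun f : Module.End K M => f m) (hcomm n)
    simp only [LinearMap.sub_apply, Module.End.mul_apply, LinearMap.smul_apply, hEm,
      map_zero, sub_zero] at this
    rw [this, hwtK (n + 1), smul_smul]
    push_cast
    ring_nf
  -- E^n applied to Y 0 m
  have hEn : ∀ n : ℕ, (E ^ n) ((Y 0) m) =
      ((vi - vi⁻¹)⁻¹ ^ n * (vi ^ ((n : ℤ) * h + n * (n + 1)) * s ^ n)) • (Y n) m := by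
    intro n
    induction n with
    | zero => simp
    | succ n ih =>
      rw [pow_succ', Module.End.mul_apply, ih, map_smul, hE, smul_smul]
      congr 1
      have key : vi ^ ((n : ℤ) * h + n * (n + 1)) * vi ^ (h + 2 * ((n : ℤ) + 1)) =
          vi ^ ((((n : ℕ) + 1 : ℕ) : ℤ) * h + (((n : ℕ) + 1 : ℕ) : ℤ) * ((((n : ℕ) + 1 : ℕ) : ℤ) + 1)) := by
        rw [← zpow_add₀ hvi]; push_cast; ring_nf
      push_cast at key ⊢
      rw [pow_succ, pow_succ, ← key]
      ring
  -- Kk'inv applied to Y n m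
  have hKinvY : ∀ n : ℕ, Kk'inv ((Y n) m) =
      ((vi ^ (h + 2 * (n : ℤ)) * s⁻¹)) • (Y n) m := by
    intro n
    have hc : (vi ^ (-(h + 2 * (n : ℤ))) * s) ≠ 0 :=
      mul_ne_zero (zpow_ne_zero _ hvi) hs
    have h1 : Kk'inv (Kk' ((Y n) m)) = (Y n) m := by
      have := congrArg (fun f : Module.End K M => f ((Y n) m)) hKinv.1
      simpa using this
    rw [hwtK' n, map_smul] at h1
    have h2 : Kk'inv ((Y n) m) = (vi ^ (-(h + 2 * (n : ℤ))) * s)⁻¹ • (Y n) m := by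
      rw [← one_smul K (Kk'inv ((Y n) m)), ← inv_mul_cancel₀ hc, mul_smul, h1]
    rw [h2]
    congr 1
    rw [mul_inv, ← zpow_neg, neg_neg]
  -- Kk'inv^k applied to Y n m
  have hKinvYk : ∀ k n : ℕ, (Kk'inv ^ k) ((Y n) m) =
      ((vi ^ (h + 2 * (n : ℤ)) * s⁻¹)) ^ k • (Y n) m := by
    intro k n
    induction k with
    | zero => simp
    | succ k ih =>
      rw [pow_succ', Module.End.mul_apply, ih, map_smul, hKinvY, smul_smul, pow_succ]
  intro n
  rw [Module.End.mul_apply, hEn, map_smul, hKinvYk, smul_smul]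
  congr 1
  rw [mul_pow, ← zpow_natCast (vi ^ (h + 2 * (n : ℤ))), ← zpow_mul, div_eq_mul_inv, ← inv_pow]
  have key : vi ^ ((n : ℤ) * h + n * (n + 1)) * vi ^ ((h + 2 * (n : ℤ)) * n) =
      vi ^ ((n : ℤ) * (2 * h + 3 * n + 1)) := by
    rw [← zpow_add₀ hvi]; ring_nf
  have hss : s ^ n * s⁻¹ ^ n = 1 := by
    rw [← mul_pow, mul_inv_cancel₀ hs, one_pow]
  calc (vi - vi⁻¹)⁻¹ ^ n * (vi ^ ((n : ℤ) * h + n * (n + 1)) * s ^ n) *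
        (vi ^ ((h + 2 * (n : ℤ)) * n) * s⁻¹ ^ n)
      = ((vi ^ ((n : ℤ) * h + n * (n + 1)) * vi ^ ((h + 2 * (n : ℤ)) * n)) *
        (s ^ n * s⁻¹ ^ n)) * (vi - vi⁻¹)⁻¹ ^ n := by ring
    _ = vi ^ ((n : ℤ) * (2 * h + 3 * n + 1)) * (vi - vi⁻¹)⁻¹ ^ n := by
        rw [key, hss, mul_one]
end
end
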